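/- arXiv:2410.05054 — 2 statements merged into one kernel-verified Lean document; each statement's English description precedes it below -/
import Mathlib

section
/- (Dyadic weighted estimate, equations (4.10) and (5.9) of the paper) There is a universal constant C > 0 with the following property. Let 0 ≤ α, 0 ≤ β with α + β < 1, let R ≥ 1, and let f, g : ℝ² → ℝ be measurable with M_f := sup_{r ≥ R} ( r^{-(2+2α)} ∫_{B(0,r)} |f|² )^{1/2} < ∞ and M_g := sup_{r ≥ R} ( r^{-(2+2β)} ∫_{B(0,r)} |g|² )^{1/2} < ∞. Then ∫_{|y| ≥ R} |f(y)| |g(y)| (1 + |y|²)^{-3/2} dy ≤ (C/(1 − α − β)) R^{α+β−1} M_f M_g. -/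
/-!
Since `⟨y⟩⁻³ ≤ |y|⁻³ = ∫_{|y|}^∞ 3 r⁻⁴ dr`, Tonelli turns the weighted integral over `|y| ≥ R` into
`∫_R^∞ 3 r⁻⁴ (∫_{B(0,r)} |f| |g|) dr`. By Cauchy–Schwarz and the definition of the Morrey norms the
inner integral is at most `M_f M_g r^{2+α+β}`, and `∫_R^∞ 3 r^{α+β-2} dr = 3 R^{α+β-1} / (1-α-β)`.
-/

open MeasureTheory Metric ENNReal

noncomputable section

/-- The plane `ℝ²` as a Euclidean space. -/
abbrev E2 := EuclideanSpace ℝ (Fin 2)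

/-- Truncated local Morrey `L²` norm
`sup_{r ≥ R} ( r^{-(d+2α)} ∫_{B(0,r)} |f|² )^{1/2}`, valued in `ℝ≥0∞`. -/
def morreyR {d : ℕ} {F : Type*} [NormedAddCommGroup F] (α R : ℝ)
    (f : EuclideanSpace ℝ (Fin d) → F) : ℝ≥0∞ :=
  ⨆ r : {r : ℝ // R ≤ r},
    ((∫⁻ x in ball (0 : EuclideanSpace ℝ (Fin d)) (r : ℝ), (‖f x‖₊ : ℝ≥0∞) ^ 2) /
      ENNReal.ofReal ((r : ℝ) ^ ((d : ℝ) + 2 * α))) ^ ((1 : ℝ) / 2)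

open Set

theorem lintegral_Ioi_ofReal_mul_rpow {a b c : ℝ} (ha : a < -1) (hb : 0 ≤ b) (hc : 0 < c) :
    ∫⁻ r in Ioi c, ENNReal.ofReal (b * r ^ a) = ENNReal.ofReal (b * (-c ^ (a + 1) / (a + 1))) := by
  have hpos : ∀ᵐ r ∂volume.restrict (Ioi c), 0 ≤ b * r ^ a := by
    filter_upwards [ae_restrict_mem measurableSet_Ioi] with r hr
    exact mul_nonneg hb (Real.rpow_nonneg (hc.trans hr).le _)
  rw [← ofReal_integral_eq_lintegral_ofReal ((integrableOn_Ioi_rpow_of_lt ha hc).const_mul b) hpos,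
    integral_const_mul, integral_Ioi_rpow_of_lt ha hc]

theorem ofReal_rpow_neg_eq_lintegral_Ioi {s t : ℝ} (hs : 0 < s) (ht : 0 < t) :
    ENNReal.ofReal (t ^ (-s)) = ∫⁻ r in Ioi t, ENNReal.ofReal (s * r ^ (-s - 1)) := by
  rw [lintegral_Ioi_ofReal_mul_rpow (by linarith) hs.le ht, sub_add_cancel]
  congr 1
  field_simp

theorem rpow_neg_div_two_one_add_sq_le {s t : ℝ} (hs : 0 ≤ s) (ht : 0 < t) :
    (1 + t ^ 2) ^ (-s / 2) ≤ t ^ (-s) := calc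
  (1 + t ^ 2) ^ (-s / 2) ≤ (t ^ 2) ^ (-s / 2) :=
    Real.rpow_le_rpow_of_nonpos (by positivity) (by linarith) (by linarith)
  _ = t ^ (-s) := by
    rw [← Real.rpow_natCast, ← Real.rpow_mul ht.le]
    ring_nf

theorem setLIntegral_mul_rpow_neg_norm_eq {E : Type*} [NormedAddCommGroup E] [MeasurableSpace E]
    [OpensMeasurableSpace E] {μ : Measure E} [SFinite μ] {s R : ℝ} (hs : 0 < s) (hR : 0 < R)
    {H : E → ℝ≥0∞} (hH : Measurable H) :
    ∫⁻ y in {y | R ≤ ‖y‖}, H y * ENNReal.ofReal (‖y‖ ^ (-s)) ∂μ =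
      ∫⁻ r in Ioi R, ENNReal.ofReal (s * r ^ (-s - 1)) *
        ∫⁻ y in ball 0 r ∩ {y | R ≤ ‖y‖}, H y ∂μ := by
  set S := {y : E | R ≤ ‖y‖}
  set w : ℝ → ℝ≥0∞ := fun r => ENNReal.ofReal (s * r ^ (-s - 1))
  have hS : MeasurableSet S := measurableSet_le measurable_const measurable_norm
  have hw : Measurable w := by fun_prop
  set K : Set (E × ℝ) := {p | ‖p.1‖ < p.2}
  have hK : MeasurableSet K := measurableSet_lt measurable_fst.norm measurable_snd
  have hweight (y : E) (hy : y ∈ S) :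
      ENNReal.ofReal (‖y‖ ^ (-s)) = ∫⁻ r in Ioi R, (Ioi ‖y‖).indicator w r := by
    rw [ofReal_rpow_neg_eq_lintegral_Ioi hs (hR.trans_le hy), lintegral_indicator measurableSet_Ioi,
      Measure.restrict_restrict measurableSet_Ioi, inter_eq_left.mpr (Ioi_subset_Ioi hy)]
  calc ∫⁻ y in S, H y * ENNReal.ofReal (‖y‖ ^ (-s)) ∂μ
      = ∫⁻ y in S, (∫⁻ r in Ioi R, K.indicator (fun p => H p.1 * w p.2) (y, r)) ∂μ := by
        refine setLIntegral_congr_fun hS fun y hy => ?_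
        rw [hweight y hy, ← lintegral_const_mul _ (hw.indicator measurableSet_Ioi)]
        congr with r
        by_cases hyr : ‖y‖ < r <;> simp [K, hyr]
    _ = ∫⁻ r in Ioi R, ∫⁻ y in S, K.indicator (fun p => H p.1 * w p.2) (y, r) ∂μ := by
        apply lintegral_lintegral_swap
        exact (((hH.comp measurable_fst).mul (hw.comp measurable_snd)).indicator hK).aemeasurable
    _ = ∫⁻ r in Ioi R, w r * ∫⁻ y in ball 0 r ∩ S, H y ∂μ := by
        congr with r
        rw [← lintegral_const_mul _ hH, ← Measure.restrict_restrict measurableSet_ball,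
          ← lintegral_indicator measurableSet_ball]
        congr with y
        by_cases hyr : ‖y‖ < r <;> simp [K, hyr, mul_comm]

section Morrey

variable {d : ℕ} {F G : Type*} [NormedAddCommGroup F] [NormedAddCommGroup G] {α β R r : ℝ}

theorem lintegral_ball_sq_rpow_le_morreyR (f : EuclideanSpace ℝ (Fin d) → F) (hRr : R ≤ r)
    (hr : 0 < r) :
    (∫⁻ x in ball 0 r, (‖f x‖₊ : ℝ≥0∞) ^ 2) ^ ((1 : ℝ) / 2) ≤
      morreyR α R f * ENNReal.ofReal (r ^ (((d : ℝ) + 2 * α) / 2)) := by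
  set I := ∫⁻ x in ball 0 r, (‖f x‖₊ : ℝ≥0∞) ^ 2
  set D := ENNReal.ofReal (r ^ ((d : ℝ) + 2 * α))
  have hD : D ≠ 0 := (ENNReal.ofReal_pos.mpr (Real.rpow_pos_of_pos hr _)).ne'
  have hI : (I / D) ^ ((1 : ℝ) / 2) ≤ morreyR α R f :=
    le_iSup_of_le (⟨r, hRr⟩ : {s : ℝ // R ≤ s}) le_rfl
  have hD_sqrt : D ^ ((1 : ℝ) / 2) = ENNReal.ofReal (r ^ (((d : ℝ) + 2 * α) / 2)) := by
    rw [ENNReal.ofReal_rpow_of_pos (Real.rpow_pos_of_pos hr _), ← Real.rpow_mul hr.le]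
    ring_nf
  calc I ^ ((1 : ℝ) / 2) = (I / D) ^ ((1 : ℝ) / 2) * D ^ ((1 : ℝ) / 2) := by
        rw [← ENNReal.mul_rpow_of_nonneg _ _ (by norm_num), ENNReal.div_mul_cancel hD ofReal_ne_top]
    _ ≤ morreyR α R f * ENNReal.ofReal (r ^ (((d : ℝ) + 2 * α) / 2)) := by
        rw [hD_sqrt]
        gcongr

theorem lintegral_ball_mul_le_morreyR_mul [MeasurableSpace F] [OpensMeasurableSpace F]
    [MeasurableSpace G] [OpensMeasurableSpace G] {f : EuclideanSpace ℝ (Fin d) → F}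
    {g : EuclideanSpace ℝ (Fin d) → G} (hf : AEMeasurable f (volume.restrict (ball 0 r)))
    (hg : AEMeasurable g (volume.restrict (ball 0 r))) (hRr : R ≤ r) (hr : 0 < r) :
    ∫⁻ x in ball 0 r, (‖f x‖₊ : ℝ≥0∞) * ‖g x‖₊ ≤
      morreyR α R f * morreyR β R g * ENNReal.ofReal (r ^ ((d : ℝ) + α + β)) := by
  have hCS := ENNReal.lintegral_mul_le_Lp_mul_Lq _ Real.HolderConjugate.two_two
    hf.enorm hg.enorm
  simp only [Pi.mul_apply, ENNReal.rpow_two] at hCS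
  calc ∫⁻ x in ball 0 r, (‖f x‖₊ : ℝ≥0∞) * ‖g x‖₊
      ≤ (∫⁻ x in ball 0 r, (‖f x‖₊ : ℝ≥0∞) ^ 2) ^ ((1 : ℝ) / 2) *
          (∫⁻ x in ball 0 r, (‖g x‖₊ : ℝ≥0∞) ^ 2) ^ ((1 : ℝ) / 2) := hCS
    _ ≤ morreyR α R f * ENNReal.ofReal (r ^ (((d : ℝ) + 2 * α) / 2)) *
          (morreyR β R g * ENNReal.ofReal (r ^ (((d : ℝ) + 2 * β) / 2))) := by
        gcongr <;> exact lintegral_ball_sq_rpow_le_morreyR _ hRr hr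
    _ = morreyR α R f * morreyR β R g * ENNReal.ofReal (r ^ ((d : ℝ) + α + β)) := by
        rw [mul_mul_mul_comm, ← ENNReal.ofReal_mul (by positivity), ← Real.rpow_add hr]
        ring_nf

theorem setLIntegral_mul_rpow_neg_norm_le_morreyR_mul [MeasurableSpace F] [OpensMeasurableSpace F]
    [MeasurableSpace G] [OpensMeasurableSpace G] {f : EuclideanSpace ℝ (Fin d) → F}
    {g : EuclideanSpace ℝ (Fin d) → G} (hf : Measurable f) (hg : Measurable g) (hR : 0 < R)
    {s : ℝ} (hs : 0 < s) (hds : (d : ℝ) + α + β < s) :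
    ∫⁻ y in {y | R ≤ ‖y‖}, (‖f y‖₊ : ℝ≥0∞) * ‖g y‖₊ * ENNReal.ofReal (‖y‖ ^ (-s)) ≤
      ENNReal.ofReal (s / (s - d - α - β) * R ^ ((d : ℝ) + α + β - s)) *
        morreyR α R f * morreyR β R g := by
  set M := morreyR α R f * morreyR β R g
  have hexp : (d : ℝ) + α + β - s - 1 < -1 := by linarith
  have hinner (r : ℝ) (hr : r ∈ Ioi R) :
      ENNReal.ofReal (s * r ^ (-s - 1)) *
          ∫⁻ y in ball 0 r ∩ {y | R ≤ ‖y‖}, (‖f y‖₊ : ℝ≥0∞) * ‖g y‖₊ ≤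
        M * ENNReal.ofReal (s * r ^ ((d : ℝ) + α + β - s - 1)) := by
    have hr0 : 0 < r := hR.trans hr
    calc ENNReal.ofReal (s * r ^ (-s - 1)) *
          ∫⁻ y in ball 0 r ∩ {y | R ≤ ‖y‖}, (‖f y‖₊ : ℝ≥0∞) * ‖g y‖₊
        ≤ ENNReal.ofReal (s * r ^ (-s - 1)) * (M * ENNReal.ofReal (r ^ ((d : ℝ) + α + β))) := by
          gcongr
          exact (lintegral_mono_set inter_subset_left).trans
            (lintegral_ball_mul_le_morreyR_mul hf.aemeasurable hg.aemeasurable (le_of_lt hr) hr0)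
      _ = M * ENNReal.ofReal (s * r ^ ((d : ℝ) + α + β - s - 1)) := by
          rw [mul_left_comm, ← ENNReal.ofReal_mul (by positivity), mul_assoc s, ← Real.rpow_add hr0]
          ring_nf
  calc ∫⁻ y in {y | R ≤ ‖y‖}, (‖f y‖₊ : ℝ≥0∞) * ‖g y‖₊ * ENNReal.ofReal (‖y‖ ^ (-s))
      = ∫⁻ r in Ioi R, ENNReal.ofReal (s * r ^ (-s - 1)) *
          ∫⁻ y in ball 0 r ∩ {y | R ≤ ‖y‖}, (‖f y‖₊ : ℝ≥0∞) * ‖g y‖₊ :=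
        setLIntegral_mul_rpow_neg_norm_eq hs hR (hf.enorm.mul hg.enorm)
    _ ≤ ∫⁻ r in Ioi R, M * ENNReal.ofReal (s * r ^ ((d : ℝ) + α + β - s - 1)) :=
        setLIntegral_mono' measurableSet_Ioi hinner
    _ = ENNReal.ofReal (s / (s - d - α - β) * R ^ ((d : ℝ) + α + β - s)) * M := by
        rw [lintegral_const_mul _ (by fun_prop), lintegral_Ioi_ofReal_mul_rpow hexp hs.le hR,
          mul_comm, sub_add_cancel]
        congr 2
        rw [show s - d - α - β = -((d : ℝ) + α + β - s) by ring, div_neg, neg_div]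
        ring
    _ = _ := (mul_assoc _ _ _).symm

end Morrey

/-- Dyadic weighted estimate (equations (4.10) and (5.9)):
`∫_{|y| ≥ R} |f||g| ⟨y⟩^{-3} dy ≤ (C/(1−α−β)) R^{α+β−1} M_f M_g` whenever `α+β < 1`,
with `M_f`, `M_g` the truncated Morrey norms of growth `α`, `β` at radius `R ≥ 1`. -/
theorem dyadic_weighted_estimate :
    ∃ C : ℝ, 0 < C ∧
      ∀ (α β : ℝ), 0 ≤ α → 0 ≤ β → α + β < 1 →
      ∀ R : ℝ, 1 ≤ R →
      ∀ f g : E2 → ℝ, Measurable f → Measurable g →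
        morreyR α R f < ⊤ → morreyR β R g < ⊤ →
        (∫⁻ y in {y : E2 | R ≤ ‖y‖},
            (‖f y‖₊ : ℝ≥0∞) * (‖g y‖₊ : ℝ≥0∞) *
              ENNReal.ofReal ((1 + ‖y‖ ^ 2) ^ (-(3 : ℝ) / 2))) ≤
          ENNReal.ofReal (C / (1 - α - β) * R ^ (α + β - 1)) *
            morreyR α R f * morreyR β R g := by
  refine ⟨3, three_pos, fun α β _ _ hαβ R hR f g hf hg _ _ => ?_⟩
  have hR0 : 0 < R := one_pos.trans_le hR
  calc ∫⁻ y in {y : E2 | R ≤ ‖y‖}, (‖f y‖₊ : ℝ≥0∞) * ‖g y‖₊ *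
        ENNReal.ofReal ((1 + ‖y‖ ^ 2) ^ (-(3 : ℝ) / 2))
      ≤ ∫⁻ y in {y : E2 | R ≤ ‖y‖}, (‖f y‖₊ : ℝ≥0∞) * ‖g y‖₊ *
          ENNReal.ofReal (‖y‖ ^ (-(3 : ℝ))) :=
        setLIntegral_mono' (measurableSet_le measurable_const measurable_norm) fun y hy => by
          gcongr
          exact rpow_neg_div_two_one_add_sq_le (by norm_num) (hR0.trans_le hy)
    _ ≤ ENNReal.ofReal (3 / (1 - α - β) * R ^ (α + β - 1)) * morreyR α R f * morreyR β R g := by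
        convert setLIntegral_mul_rpow_neg_norm_le_morreyR_mul (α := α) (β := β) hf hg hR0 three_pos
          (by push_cast; linarith) using 5
        · push_cast; ring
        · push_cast; ring_nf
end
end

section
/- (Weighted square-integral estimate, from the proof of Proposition 6.6) Let d ≥ 1 and 0 ≤ α < 1/2. There is a constant C > 0, depending only on d and α, such that for every λ ≥ 1 and every measurable f : ℝ^d → ℝ with M := sup_{r ≥ 1} ( r^{-(d+2α)} ∫_{B(0,r)} |f|² )^{1/2} < ∞, one has ∫_{ℝ^d} |f(y)|² (1 + |y|²/λ²)^{-(d+1)/2} dy ≤ C λ^{d+2α} M². -/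
/-!
Split the space into the ball `B(0, λ)` and the dyadic annuli `2ᵏλ ≤ |y| < 2ᵏ⁺¹λ`. On the
`k`-th annulus the weight is at most `2^{-k(d+1)}`, while the Morrey bound controls the integral
of `|f|²` over `B(0, 2ᵏ⁺¹λ)` by `M² (2ᵏ⁺¹λ)^{d+2α}`. The contributions of the annuli thus form a
geometric series of ratio `2^{2α-1} < 1`.
-/

open MeasureTheory Metric ENNReal

noncomputable section

open Real

lemma rpow_neg_two_mul_mul_rpow_two_pow_succ_mul (s p : ℝ) {ρ : ℝ} (hρ : 0 ≤ ρ) (k : ℕ) :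
    ((2 : ℝ) ^ k) ^ (-(2 * s)) * (2 ^ (k + 1) * ρ) ^ p =
      2 ^ p * ρ ^ p * (2 ^ (p - 2 * s)) ^ k := by
  have h2k : (0 : ℝ) < 2 ^ k := by positivity
  rw [pow_succ', mul_rpow (by positivity) hρ, mul_rpow zero_le_two h2k.le,
    rpow_pow_comm zero_le_two, show p - 2 * s = -(2 * s) + p by ring, rpow_add h2k]
  ring

lemma one_add_sq_div_sq_rpow_neg_le {a t ρ s : ℝ} (hs : 0 ≤ s) (ha : 0 < a) (hρ : 0 < ρ)
    (hat : a * ρ ≤ t) :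
    (1 + t ^ 2 / ρ ^ 2) ^ (-s) ≤ a ^ (-(2 * s)) := by
  have hsq : a ^ 2 ≤ 1 + t ^ 2 / ρ ^ 2 := by
    have : a ^ 2 ≤ t ^ 2 / ρ ^ 2 := by
      rw [le_div_iff₀ (by positivity), ← mul_pow]
      exact pow_le_pow_left₀ (by positivity) hat 2
    linarith
  calc (1 + t ^ 2 / ρ ^ 2) ^ (-s) ≤ (a ^ 2) ^ (-s) :=
        rpow_le_rpow_of_nonpos (by positivity) hsq (by linarith)
    _ = a ^ (-(2 * s)) := by
        rw [← Real.rpow_natCast, ← rpow_mul ha.le]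
        norm_num

lemma setLIntegral_ball_le_morreyR {d : ℕ} {F : Type*} [NormedAddCommGroup F] {α R r : ℝ}
    (f : EuclideanSpace ℝ (Fin d) → F) (hRr : R ≤ r) (hr : 0 < r) :
    ∫⁻ x in ball (0 : EuclideanSpace ℝ (Fin d)) r, (‖f x‖₊ : ℝ≥0∞) ^ 2 ≤
      morreyR α R f ^ 2 * ENNReal.ofReal (r ^ ((d : ℝ) + 2 * α)) := by
  have hterm : ((∫⁻ x in ball (0 : EuclideanSpace ℝ (Fin d)) r, (‖f x‖₊ : ℝ≥0∞) ^ 2) /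
      ENNReal.ofReal (r ^ ((d : ℝ) + 2 * α))) ^ ((1 : ℝ) / 2) ≤ morreyR α R f :=
    le_iSup_of_le (ι := {r : ℝ // R ≤ r}) ⟨r, hRr⟩ le_rfl
  rwa [one_div, ENNReal.rpow_inv_le_iff two_pos, ENNReal.rpow_two,
    ENNReal.div_le_iff (by simpa using Real.rpow_pos_of_pos hr _) ENNReal.ofReal_ne_top] at hterm

section Annuli

variable {E : Type*} [SeminormedAddCommGroup E]

lemma univ_subset_ball_union_iUnion_annulus {ρ : ℝ} (hρ : 0 < ρ) :
    (Set.univ : Set E) ⊆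
      ball 0 ρ ∪ ⋃ k : ℕ, ball 0 (2 ^ (k + 1) * ρ) \ ball 0 (2 ^ k * ρ) := by
  intro y _
  rcases lt_or_ge ‖y‖ ρ with hy | hy
  · exact Or.inl (mem_ball_zero_iff.2 hy)
  · obtain ⟨k, hk, hk'⟩ := exists_nat_pow_near ((one_le_div hρ).2 hy) one_lt_two
    refine Or.inr (Set.mem_iUnion.2 ⟨k, ?_, ?_⟩)
    · rwa [mem_ball_zero_iff, ← div_lt_iff₀ hρ]
    · rwa [mem_ball_zero_iff, not_lt, ← le_div_iff₀ hρ]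

variable [MeasurableSpace E] (μ : Measure E) (g : E → ℝ≥0∞)

lemma lintegral_le_setLIntegral_ball_add_tsum_annulus {ρ : ℝ} (hρ : 0 < ρ) :
    ∫⁻ y, g y ∂μ ≤ ∫⁻ y in ball 0 ρ, g y ∂μ +
      ∑' k : ℕ, ∫⁻ y in ball 0 (2 ^ (k + 1) * ρ) \ ball 0 (2 ^ k * ρ), g y ∂μ :=
  calc ∫⁻ y, g y ∂μ = ∫⁻ y in Set.univ, g y ∂μ := (setLIntegral_univ g).symm
    _ ≤ ∫⁻ y in ball 0 ρ ∪ ⋃ k : ℕ, ball 0 (2 ^ (k + 1) * ρ) \ ball 0 (2 ^ k * ρ), g y ∂μ :=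
      lintegral_mono_set (univ_subset_ball_union_iUnion_annulus hρ)
    _ ≤ _ := (lintegral_union_le _ _ _).trans (add_le_add le_rfl (lintegral_iUnion_le _ _))

variable [OpensMeasurableSpace E] {ρ p s : ℝ} {A : ℝ≥0∞}

lemma setLIntegral_annulus_mul_weight_le (hs : 0 ≤ s) (hρ : 0 < ρ)
    (hg : ∀ r, ρ ≤ r → ∫⁻ y in ball 0 r, g y ∂μ ≤ A * ENNReal.ofReal (r ^ p)) (k : ℕ) :
    ∫⁻ y in ball 0 (2 ^ (k + 1) * ρ) \ ball 0 (2 ^ k * ρ),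
        g y * ENNReal.ofReal ((1 + ‖y‖ ^ 2 / ρ ^ 2) ^ (-s)) ∂μ ≤
      ENNReal.ofReal (2 ^ p * ρ ^ p * (2 ^ (p - 2 * s)) ^ k) * A := by
  set c : ℝ := ((2 : ℝ) ^ k) ^ (-(2 * s))
  have hweight : ∀ y ∈ ball (0 : E) (2 ^ (k + 1) * ρ) \ ball 0 (2 ^ k * ρ),
      g y * ENNReal.ofReal ((1 + ‖y‖ ^ 2 / ρ ^ 2) ^ (-s)) ≤ ENNReal.ofReal c * g y :=
    fun y hy => by
      rw [mul_comm]
      gcongr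
      exact one_add_sq_div_sq_rpow_neg_le hs (by positivity) hρ
        (not_lt.1 (mt mem_ball_zero_iff.2 hy.2))
  calc _ ≤ ∫⁻ y in ball 0 (2 ^ (k + 1) * ρ) \ ball 0 (2 ^ k * ρ), ENNReal.ofReal c * g y ∂μ :=
        setLIntegral_mono' (measurableSet_ball.diff measurableSet_ball) hweight
    _ = ENNReal.ofReal c * ∫⁻ y in ball 0 (2 ^ (k + 1) * ρ) \ ball 0 (2 ^ k * ρ), g y ∂μ :=
        lintegral_const_mul' _ _ ENNReal.ofReal_ne_top
    _ ≤ ENNReal.ofReal c * (A * ENNReal.ofReal ((2 ^ (k + 1) * ρ) ^ p)) := by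
        gcongr
        exact (lintegral_mono_set Set.sdiff_subset).trans
          (hg _ (le_mul_of_one_le_left hρ.le (one_le_pow₀ one_le_two)))
    _ = _ := by
        rw [mul_left_comm, ← ENNReal.ofReal_mul (by positivity),
          rpow_neg_two_mul_mul_rpow_two_pow_succ_mul s p hρ.le k, mul_comm]

theorem lintegral_mul_one_add_sq_div_sq_rpow_neg_le (hs : 0 ≤ s) (hps : p < 2 * s)
    (hρ : 0 < ρ) (hg : ∀ r, ρ ≤ r → ∫⁻ y in ball 0 r, g y ∂μ ≤ A * ENNReal.ofReal (r ^ p)) :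
    ∫⁻ y, g y * ENNReal.ofReal ((1 + ‖y‖ ^ 2 / ρ ^ 2) ^ (-s)) ∂μ ≤
      ENNReal.ofReal ((1 + 2 ^ p / (1 - 2 ^ (p - 2 * s))) * ρ ^ p) * A := by
  set q : ℝ := 2 ^ (p - 2 * s)
  have hq0 : 0 ≤ q := by positivity
  have hq1 : q < 1 := rpow_lt_one_of_one_lt_of_neg one_lt_two (by linarith)
  have hball : ∫⁻ y in ball 0 ρ, g y * ENNReal.ofReal ((1 + ‖y‖ ^ 2 / ρ ^ 2) ^ (-s)) ∂μ ≤
      ENNReal.ofReal (ρ ^ p) * A := by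
    refine (setLIntegral_mono' measurableSet_ball fun y _ => ?_).trans
      ((hg ρ le_rfl).trans_eq (mul_comm _ _))
    refine mul_le_of_le_one_right (by positivity) (ENNReal.ofReal_le_one.2 ?_)
    exact rpow_le_one_of_one_le_of_nonpos (le_add_of_nonneg_right (by positivity)) (by linarith)
  have hgeom : ∑' k : ℕ, ENNReal.ofReal (2 ^ p * ρ ^ p * q ^ k) =
      ENNReal.ofReal (2 ^ p / (1 - q) * ρ ^ p) := by
    rw [← ENNReal.ofReal_tsum_of_nonneg (fun k => by positivity)
      ((summable_geometric_of_lt_one hq0 hq1).mul_left _), tsum_mul_left,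
      tsum_geometric_of_lt_one hq0 hq1]
    congr 1
    ring
  calc _ ≤ _ := lintegral_le_setLIntegral_ball_add_tsum_annulus μ _ hρ
    _ ≤ ENNReal.ofReal (ρ ^ p) * A + ∑' k : ℕ, ENNReal.ofReal (2 ^ p * ρ ^ p * q ^ k) * A :=
        add_le_add hball (ENNReal.tsum_le_tsum (setLIntegral_annulus_mul_weight_le μ g hs hρ hg))
    _ = _ := by
        rw [ENNReal.tsum_mul_right, hgeom, ← add_mul,
          ← ENNReal.ofReal_add (by positivity)
            (mul_nonneg (div_nonneg (by positivity) (by linarith)) (by positivity))]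
        congr 2
        ring

end Annuli

theorem weighted_square_estimate_general (d : ℕ) (α : ℝ) (hα : α < 1 / 2) :
    ∃ C : ℝ, 0 < C ∧
      ∀ lam : ℝ, 1 ≤ lam →
      ∀ f : EuclideanSpace ℝ (Fin d) → ℝ, Measurable f →
        morreyR α 1 f < ⊤ →
        (∫⁻ y, (‖f y‖₊ : ℝ≥0∞) ^ 2 *
            ENNReal.ofReal ((1 + ‖y‖ ^ 2 / lam ^ 2) ^ (-((d : ℝ) + 1) / 2))) ≤
          ENNReal.ofReal (C * lam ^ ((d : ℝ) + 2 * α)) * (morreyR α 1 f) ^ 2 := by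
  set p : ℝ := (d : ℝ) + 2 * α
  set s : ℝ := ((d : ℝ) + 1) / 2
  have hps : p < 2 * s := by simp only [p, s]; linarith
  have hq : (2 : ℝ) ^ (p - 2 * s) < 1 := rpow_lt_one_of_one_lt_of_neg one_lt_two (by linarith)
  refine ⟨1 + 2 ^ p / (1 - 2 ^ (p - 2 * s)),
    add_pos_of_pos_of_nonneg one_pos (div_nonneg (by positivity) (by linarith)),
    fun lam hlam f _ _ => ?_⟩
  rw [neg_div]
  exact lintegral_mul_one_add_sq_div_sq_rpow_neg_le volume (fun y => (‖f y‖₊ : ℝ≥0∞) ^ 2)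
    (by positivity) hps (by linarith)
    fun r hr => setLIntegral_ball_le_morreyR f (hlam.trans hr) (by linarith)

/-- Weighted square-integral estimate (from the proof of Proposition 6.6):
`∫ |f(y)|² (1 + |y|²/λ²)^{-(d+1)/2} dy ≤ C λ^{d+2α} M²` for `λ ≥ 1`,
where `M = ‖f‖_{L²_α}` and `C` depends only on `d` and `α < 1/2`. -/
theorem weighted_square_estimate (d : ℕ) (hd : 1 ≤ d) (α : ℝ) (hα0 : 0 ≤ α)
    (hα : α < 1 / 2) :
    ∃ C : ℝ, 0 < C ∧
      ∀ lam : ℝ, 1 ≤ lam →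
      ∀ f : EuclideanSpace ℝ (Fin d) → ℝ, Measurable f →
        morreyR α 1 f < ⊤ →
        (∫⁻ y, (‖f y‖₊ : ℝ≥0∞) ^ 2 *
            ENNReal.ofReal ((1 + ‖y‖ ^ 2 / lam ^ 2) ^ (-((d : ℝ) + 1) / 2))) ≤
          ENNReal.ofReal (C * lam ^ ((d : ℝ) + 2 * α)) * (morreyR α 1 f) ^ 2 :=
  weighted_square_estimate_general d α hα
end
end
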